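/- arXiv:2403.08948 — 4 statements merged into one kernel-verified Lean document; each statement's English description precedes it below -/
import Mathlib

section
/- Suppose K₁ = γ(R₁₁ + γB₁ᵀPB₁)⁻¹B₁ᵀP(A − B₂K₂) and K₂ = γ(R₁₂ + γB₂ᵀPB₂)⁻¹B₂ᵀP(A − B₁K₁). Define F₁ = B₁ᵀP(I − γB₂(R₁₂ + γB₂ᵀPB₂)⁻¹B₂ᵀP). Then (R₁₁ + γF₁B₁)K₁ = γF₁A. -/
open Matrix

theorem stmt_1 {n m1 m2 : ℕ}
    (A : Matrix (Fin n) (Fin n) ℝ) (B₁ : Matrix (Fin n) (Fin m1) ℝ)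
    (B₂ : Matrix (Fin n) (Fin m2) ℝ) (K₁ : Matrix (Fin m1) (Fin n) ℝ)
    (K₂ : Matrix (Fin m2) (Fin n) ℝ) (P : Matrix (Fin n) (Fin n) ℝ)
    (R₁₁ : Matrix (Fin m1) (Fin m1) ℝ) (R₁₂ : Matrix (Fin m2) (Fin m2) ℝ)
    (γ : ℝ) (hγ : 0 < γ)
    (hP : P.IsSymm) (hR11 : R₁₁.PosDef) (hR12 : R₁₂.PosDef)
    (hInv1 : IsUnit (R₁₁ + γ • (B₁ᵀ * P * B₁)).det)
    (hInv2 : IsUnit (R₁₂ + γ • (B₂ᵀ * P * B₂)).det)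
    (hK₁ : K₁ = γ • ((R₁₁ + γ • (B₁ᵀ * P * B₁))⁻¹ * (B₁ᵀ * P * (A - B₂ * K₂))))
    (hK₂ : K₂ = γ • ((R₁₂ + γ • (B₂ᵀ * P * B₂))⁻¹ * (B₂ᵀ * P * (A - B₁ * K₁))))
    (F₁ : Matrix (Fin m1) (Fin n) ℝ)
    (hF₁ : F₁ = B₁ᵀ * P * (1 - γ • (B₂ * (R₁₂ + γ • (B₂ᵀ * P * B₂))⁻¹ * (B₂ᵀ * P)))) :
    (R₁₁ + γ • (F₁ * B₁)) * K₁ = γ • (F₁ * A) := by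
  have h1 : (R₁₁ + γ • (B₁ᵀ * P * B₁)) * K₁ = γ • (B₁ᵀ * P * (A - B₂ * K₂)) := by
    rw [hK₁, Matrix.mul_smul, ← Matrix.mul_assoc,
      Matrix.mul_nonsing_inv _ hInv1, Matrix.one_mul]
  rw [hK₂] at h1
  have h2 : R₁₁ * K₁ = γ • (B₁ᵀ * P *
      (A - B₂ * (γ • ((R₁₂ + γ • (B₂ᵀ * P * B₂))⁻¹ * (B₂ᵀ * P * (A - B₁ * K₁))))))
      - γ • (B₁ᵀ * P * B₁) * K₁ := by
    rw [← h1]; rw [Matrix.add_mul]; abel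
  rw [hF₁, Matrix.add_mul, h2]
  simp only [Matrix.mul_add, Matrix.add_mul, Matrix.mul_sub, Matrix.sub_mul,
    Matrix.mul_smul, Matrix.smul_mul, Matrix.mul_assoc, smul_smul, smul_add,
    smul_sub, Matrix.mul_one, Matrix.one_mul]
  abel
end

section
/- Let H be the block matrix with H_uu = R₁₁ + γB₁ᵀPB₁, H_uv = γB₁ᵀPB₂, H_ux = γB₁ᵀPA, H_vv = R₁₂ + γB₂ᵀPB₂, H_vu = γB₂ᵀPB₁, H_vx = γB₂ᵀPA where R₁₁, R₁₂ are symmetric positive definite, P symmetric positive semidefinite, γ > 0. Assume the Schur complements H_uu − H_uv H_vv⁻¹ H_vu and H_vv − H_vu H_uu⁻¹ H_uv are invertible. Define K₁ = (H_uu − H_uv H_vv⁻¹ H_vu)⁻¹(H_ux − H_uv H_vv⁻¹ H_vx) and K₂ = (H_vv − H_vu H_uu⁻¹ H_uv)⁻¹(H_vx − H_vu H_uu⁻¹ H_ux). Then K₁ and K₂ satisfy the coupled equations K₁ = γ(R₁₁ + γB₁ᵀPB₁)⁻¹B₁ᵀP(A − B₂K₂) and K₂ = γ(R₁₂ + γB₂ᵀPB₂)⁻¹B₂ᵀP(A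 − B₁K₁). -/
/-!
The feedback gains `K₁, K₂` are the two block rows of the solution of the block system
`Huu K₁ + Huv K₂ = Hux`, `Hvu K₁ + Hvv K₂ = Hvx`: eliminating `K₂` (resp. `K₁`) from it gives the
Schur-complement formulas defining `K₁` (resp. `K₂`). Since `Huu = R₁₁ + γ B₁ᵀ P B₁` and
`Hvv = R₁₂ + γ B₂ᵀ P B₂` are positive definite, each block row can then be solved for its own
unknown, which is the pair of coupled equations.
-/

open Matrix

theorem Matrix.PosDef.add_smul_transpose_mul_mul {m n : Type*} [Fintype m] [Fintype n]
    {Q : Matrix m m ℝ} {P : Matrix n n ℝ} (hQ : Q.PosDef) (hP : P.PosSemidef)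
    (B : Matrix n m ℝ) {γ : ℝ} (hγ : 0 ≤ γ) : (Q + γ • (Bᵀ * P * B)).PosDef :=
  hQ.add_posSemidef (by simpa using (hP.conjTranspose_mul_mul_same B).smul hγ)

section BlockElimination

variable {R : Type*} [CommRing R] {k l p : Type*} [Fintype k] [Fintype l] [DecidableEq l]
  {Huu : Matrix k k R} {Huv : Matrix k l R} {Hux : Matrix k p R}
  {Hvv : Matrix l l R} {Hvu : Matrix l k R} {Hvx : Matrix l p R}
  {K₁ : Matrix k p R} {K₂ : Matrix l p R}

theorem add_mul_eq_iff_schur_mul_eq (hv : IsUnit Hvv.det) (h₂ : Hvu * K₁ + Hvv * K₂ = Hvx) :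
    Huu * K₁ + Huv * K₂ = Hux ↔
      (Huu - Huv * Hvv⁻¹ * Hvu) * K₁ = Hux - Huv * Hvv⁻¹ * Hvx := by
  obtain rfl : K₂ = Hvv⁻¹ * (Hvx - Hvu * K₁) := by
    rw [← h₂, add_sub_cancel_left, nonsing_inv_mul_cancel_left _ _ hv]
  simp only [Matrix.sub_mul, Matrix.mul_sub, Matrix.mul_assoc]
  constructor
  · rintro rfl
    abel
  · intro h
    rw [← sub_eq_zero, ← sub_eq_zero.mpr h]
    abel

variable [DecidableEq k]

theorem block_system_of_schur (hu : IsUnit Huu.det) (hv : IsUnit Hvv.det)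
    (hS₁ : IsUnit (Huu - Huv * Hvv⁻¹ * Hvu).det) (hS₂ : IsUnit (Hvv - Hvu * Huu⁻¹ * Huv).det)
    (hK₁ : K₁ = (Huu - Huv * Hvv⁻¹ * Hvu)⁻¹ * (Hux - Huv * Hvv⁻¹ * Hvx))
    (hK₂ : K₂ = (Hvv - Hvu * Huu⁻¹ * Huv)⁻¹ * (Hvx - Hvu * Huu⁻¹ * Hux)) :
    Huu * K₁ + Huv * K₂ = Hux ∧ Hvu * K₁ + Hvv * K₂ = Hvx := by
  set K₂' := Hvv⁻¹ * (Hvx - Hvu * K₁)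
  have row₂ : Hvu * K₁ + Hvv * K₂' = Hvx := by
    rw [mul_nonsing_inv_cancel_left _ _ hv, add_sub_cancel]
  have row₁ : Huu * K₁ + Huv * K₂' = Hux :=
    (add_mul_eq_iff_schur_mul_eq hv row₂).mpr (by rw [hK₁, mul_nonsing_inv_cancel_left _ _ hS₁])
  have schur₂ : (Hvv - Hvu * Huu⁻¹ * Huv) * K₂' = Hvx - Hvu * Huu⁻¹ * Hux :=
    (add_mul_eq_iff_schur_mul_eq hu (by rwa [add_comm])).mp (by rwa [add_comm])
  have hK₂' : K₂' = K₂ := by rw [hK₂, ← schur₂, nonsing_inv_mul_cancel_left _ _ hS₂]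
  exact hK₂' ▸ ⟨row₁, row₂⟩

end BlockElimination

theorem stmt_5 {n m1 m2 : ℕ}
    (A P : Matrix (Fin n) (Fin n) ℝ) (B₁ : Matrix (Fin n) (Fin m1) ℝ)
    (B₂ : Matrix (Fin n) (Fin m2) ℝ)
    (R₁₁ : Matrix (Fin m1) (Fin m1) ℝ) (R₁₂ : Matrix (Fin m2) (Fin m2) ℝ)
    (γ : ℝ) (hγ : 0 < γ) (hP : P.PosSemidef) (hR11 : R₁₁.PosDef) (hR12 : R₁₂.PosDef)
    (Huu : Matrix (Fin m1) (Fin m1) ℝ) (Huv : Matrix (Fin m1) (Fin m2) ℝ)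
    (Hux : Matrix (Fin m1) (Fin n) ℝ) (Hvv : Matrix (Fin m2) (Fin m2) ℝ)
    (Hvu : Matrix (Fin m2) (Fin m1) ℝ) (Hvx : Matrix (Fin m2) (Fin n) ℝ)
    (hHuu : Huu = R₁₁ + γ • (B₁ᵀ * P * B₁)) (hHuv : Huv = γ • (B₁ᵀ * P * B₂))
    (hHux : Hux = γ • (B₁ᵀ * P * A)) (hHvv : Hvv = R₁₂ + γ • (B₂ᵀ * P * B₂))
    (hHvu : Hvu = γ • (B₂ᵀ * P * B₁)) (hHvx : Hvx = γ • (B₂ᵀ * P * A))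
    (hS1 : IsUnit (Huu - Huv * Hvv⁻¹ * Hvu).det)
    (hS2 : IsUnit (Hvv - Hvu * Huu⁻¹ * Huv).det)
    (K₁ : Matrix (Fin m1) (Fin n) ℝ) (K₂ : Matrix (Fin m2) (Fin n) ℝ)
    (hK₁ : K₁ = (Huu - Huv * Hvv⁻¹ * Hvu)⁻¹ * (Hux - Huv * Hvv⁻¹ * Hvx))
    (hK₂ : K₂ = (Hvv - Hvu * Huu⁻¹ * Huv)⁻¹ * (Hvx - Hvu * Huu⁻¹ * Hux)) :
    K₁ = γ • ((R₁₁ + γ • (B₁ᵀ * P * B₁))⁻¹ * (B₁ᵀ * P * (A - B₂ * K₂)))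
    ∧ K₂ = γ • ((R₁₂ + γ • (B₂ᵀ * P * B₂))⁻¹ * (B₂ᵀ * P * (A - B₁ * K₁))) := by
  have hu : IsUnit Huu.det :=
    hHuu ▸ (hR11.add_smul_transpose_mul_mul hP B₁ hγ.le).det_pos.ne'.isUnit
  have hv : IsUnit Hvv.det :=
    hHvv ▸ (hR12.add_smul_transpose_mul_mul hP B₂ hγ.le).det_pos.ne'.isUnit
  obtain ⟨row₁, row₂⟩ := block_system_of_schur hu hv hS1 hS2 hK₁ hK₂
  constructor
  · calc K₁ = Huu⁻¹ * (Huu * K₁) := (nonsing_inv_mul_cancel_left _ _ hu).symm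
      _ = _ := by
        rw [eq_sub_of_add_eq row₁, hHuu, hHux, hHuv]
        simp only [Matrix.mul_sub, Matrix.smul_mul, Matrix.mul_smul, smul_sub, Matrix.mul_assoc]
  · calc K₂ = Hvv⁻¹ * (Hvv * K₂) := (nonsing_inv_mul_cancel_left _ _ hv).symm
      _ = _ := by
        rw [eq_sub_of_add_eq' row₂, hHvv, hHvx, hHvu]
        simp only [Matrix.mul_sub, Matrix.smul_mul, Matrix.mul_smul, smul_sub, Matrix.mul_assoc]
end

section
/- Suppose P_{i+1} = Q₁ + K₁ᵀR₁₁K₁ + K₂ᵀR₁₂K₂ + γ(A + B₁K₁ + B₂K₂)ᵀP_i(A + B₁K₁ + B₂K₂), where K₁ = −(R₁₁ + γB₁ᵀP_iB₁ − γ²B₁ᵀP_iB₂(R₁₂ + γB₂ᵀP_iB₂)⁻¹B₂ᵀP_iB₁)⁻¹ γB₁ᵀP_i(I − γB₂(R₁₂ + γB₂ᵀP_iB₂)⁻¹B₂ᵀP_i)A and K₂ analogously with indices 1 and 2 swapped. Then P_{i+1} = Q₁ + γAᵀP_iA − γ²[AᵀP_iB₁ AᵀP_iB₂] · ([R₁₁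 + γB₁ᵀP_iB₁, γB₁ᵀP_iB₂; γB₂ᵀP_iB₁, R₁₂ + γB₂ᵀP_iB₂])⁻¹ · [B₁ᵀP_iA; B₂ᵀP_iA], i.e., the minimizing gains over both players jointly satisfy the block Riccati recursion. -/
/-!
Stack the gains into `K = [K₁; K₂]` and the inputs into `B = [B₁ B₂]`, so that
`G = diag(R₁₁, R₁₂) + γ BᵀPB`. The Schur-complement formulas for the inverse of the 2×2 block
matrix `G` show that the two coupled gain formulas say exactly `K = -γ G⁻¹ BᵀPA`. For this `K`,
completing the square gives `KᵀRK + γ(A + BK)ᵀP(A + BK) = γAᵀPA + γAᵀPBK`, because the remaining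
terms are `Kᵀ(GK + γBᵀPA) = 0`. Positive definiteness of `G` makes `G` and its diagonal blocks
invertible.
-/

open Matrix

namespace Matrix

variable {l m n : Type*}

theorem PosDef.toBlocks₁₁ {R : Type*} [CommRing R] [PartialOrder R] [StarRing R]
    {M : Matrix (m ⊕ n) (m ⊕ n) R} (h : M.PosDef) :
    M.toBlocks₁₁.PosDef :=
  h.submatrix Sum.inl_injective

theorem PosDef.toBlocks₂₂ {R : Type*} [CommRing R] [PartialOrder R] [StarRing R]
    {M : Matrix (m ⊕ n) (m ⊕ n) R} (h : M.PosDef) :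
    M.toBlocks₂₂.PosDef :=
  h.submatrix Sum.inr_injective

variable [Fintype m] [Fintype n] [DecidableEq m] [DecidableEq n] {α : Type*} [CommRing α]

theorem inv_fromBlocks_mul_fromRows (A : Matrix m m α) (B : Matrix m n α) (C : Matrix n m α)
    (D : Matrix n n α) [Invertible A] [Invertible D] [Invertible (fromBlocks A B C D)]
    (v : Matrix m l α) (w : Matrix n l α) :
    (fromBlocks A B C D)⁻¹ * fromRows v w =
      fromRows ((A - B * D⁻¹ * C)⁻¹ * (v - B * D⁻¹ * w))
        ((D - C * A⁻¹ * B)⁻¹ * (w - C * A⁻¹ * v)) := by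
  let := invertibleOfFromBlocks₂₂Invertible A B C D
  let := invertibleOfFromBlocks₁₁Invertible A B C D
  rw [← fromRows_toRows ((fromBlocks A B C D)⁻¹ * fromRows v w)]
  congr 1
  · rw [← invOf_eq_nonsing_inv, invOf_fromBlocks₂₂_eq, fromBlocks_mul_fromRows, toRows₁_fromRows]
    simp only [invOf_eq_nonsing_inv, Matrix.mul_sub, Matrix.neg_mul, Matrix.mul_assoc]
    abel
  · rw [← invOf_eq_nonsing_inv, invOf_fromBlocks₁₁_eq, fromBlocks_mul_fromRows, toRows₂_fromRows]
    simp only [invOf_eq_nonsing_inv, Matrix.mul_sub, Matrix.neg_mul, Matrix.mul_assoc]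
    abel

end Matrix

theorem riccati_update_of_optimal_gain {m n : Type*} [Fintype m] [Fintype n] [DecidableEq m]
    {α : Type*} [CommRing α] (A P Q : Matrix n n α) (B : Matrix n m α) (R G : Matrix m m α)
    (K : Matrix m n α) (γ : α) (hG : G = R + γ • (Bᵀ * P * B)) (hGu : IsUnit G.det)
    (hK : K = -(γ • (G⁻¹ * (Bᵀ * P * A)))) :
    Q + Kᵀ * R * K + γ • ((A + B * K)ᵀ * P * (A + B * K)) =
      Q + γ • (Aᵀ * P * A) - (γ * γ) • (Aᵀ * P * B * G⁻¹ * (Bᵀ * P * A)) := by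
  have hGK : G * K = -(γ • (Bᵀ * P * A)) := by
    rw [hK, Matrix.mul_neg, Matrix.mul_smul, mul_nonsing_inv_cancel_left _ _ hGu]
  have expand : Kᵀ * R * K + γ • ((A + B * K)ᵀ * P * (A + B * K)) =
      γ • (Aᵀ * P * A) + γ • (Aᵀ * P * B * K) + Kᵀ * (G * K + γ • (Bᵀ * P * A)) := by
    simp only [hG, transpose_add, transpose_mul, Matrix.add_mul, Matrix.mul_add, smul_add,
      Matrix.mul_smul, Matrix.smul_mul, Matrix.mul_assoc]
    abel
  rw [add_assoc, expand, hGK, neg_add_cancel, Matrix.mul_zero, add_zero, hK]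
  simp only [Matrix.mul_neg, Matrix.mul_smul, smul_neg, smul_smul, Matrix.mul_assoc]
  abel

theorem fromRows_gains_eq {m₁ m₂ n : Type*} [Fintype m₁] [Fintype m₂] [Fintype n]
    [DecidableEq m₁] [DecidableEq m₂] [DecidableEq n] {α : Type*} [CommRing α]
    (A P : Matrix n n α) (B₁ : Matrix n m₁ α) (B₂ : Matrix n m₂ α)
    (R₁ : Matrix m₁ m₁ α) (R₂ : Matrix m₂ m₂ α) (γ : α)
    (hD₁ : IsUnit (R₁ + γ • (B₁ᵀ * P * B₁)).det) (hD₂ : IsUnit (R₂ + γ • (B₂ᵀ * P * B₂)).det)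
    (hG : IsUnit (fromBlocks (R₁ + γ • (B₁ᵀ * P * B₁)) (γ • (B₁ᵀ * P * B₂))
                   (γ • (B₂ᵀ * P * B₁)) (R₂ + γ • (B₂ᵀ * P * B₂))).det)
    (K₁ : Matrix m₁ n α) (K₂ : Matrix m₂ n α)
    (hK₁ : K₁ = -((R₁ + γ • (B₁ᵀ * P * B₁)
            - (γ * γ) • (B₁ᵀ * P * B₂ * (R₂ + γ • (B₂ᵀ * P * B₂))⁻¹ * (B₂ᵀ * P * B₁)))⁻¹
          * (γ • (B₁ᵀ * P
              * (1 - γ • (B₂ * (R₂ + γ • (B₂ᵀ * P * B₂))⁻¹ * (B₂ᵀ * P))) * A))))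
    (hK₂ : K₂ = -((R₂ + γ • (B₂ᵀ * P * B₂)
            - (γ * γ) • (B₂ᵀ * P * B₁ * (R₁ + γ • (B₁ᵀ * P * B₁))⁻¹ * (B₁ᵀ * P * B₂)))⁻¹
          * (γ • (B₂ᵀ * P
              * (1 - γ • (B₁ * (R₁ + γ • (B₁ᵀ * P * B₁))⁻¹ * (B₁ᵀ * P))) * A)))) :
    fromRows K₁ K₂ = -(γ • ((fromBlocks (R₁ + γ • (B₁ᵀ * P * B₁)) (γ • (B₁ᵀ * P * B₂))
                   (γ • (B₂ᵀ * P * B₁)) (R₂ + γ • (B₂ᵀ * P * B₂)))⁻¹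
        * ((fromCols B₁ B₂)ᵀ * P * A))) := by
  let := invertibleOfIsUnitDet _ hD₁
  let := invertibleOfIsUnitDet _ hD₂
  let := invertibleOfIsUnitDet _ hG
  have hBPA : γ • ((fromCols B₁ B₂)ᵀ * P * A) =
      fromRows (γ • (B₁ᵀ * P * A)) (γ • (B₂ᵀ * P * A)) := by
    rw [transpose_fromCols, fromRows_mul, fromRows_mul]
    ext (i | i) j <;> rfl
  rw [← Matrix.mul_smul, hBPA, inv_fromBlocks_mul_fromRows, fromRows_neg, hK₁, hK₂]
  congr 3 <;>
    simp only [Matrix.mul_sub, Matrix.sub_mul, Matrix.mul_one, smul_sub, Matrix.smul_mul,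
      Matrix.mul_smul, smul_smul, Matrix.mul_assoc]

theorem stmt_9_general {n m1 m2 : ℕ}
    (A Q₁ Pi : Matrix (Fin n) (Fin n) ℝ) (B₁ : Matrix (Fin n) (Fin m1) ℝ)
    (B₂ : Matrix (Fin n) (Fin m2) ℝ)
    (R₁₁ : Matrix (Fin m1) (Fin m1) ℝ) (R₁₂ : Matrix (Fin m2) (Fin m2) ℝ)
    (γ : ℝ)
    (G : Matrix (Fin m1 ⊕ Fin m2) (Fin m1 ⊕ Fin m2) ℝ)
    (hG : G = fromBlocks (R₁₁ + γ • (B₁ᵀ * Pi * B₁)) (γ • (B₁ᵀ * Pi * B₂))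
                         (γ • (B₂ᵀ * Pi * B₁)) (R₁₂ + γ • (B₂ᵀ * Pi * B₂)))
    (hGpd : G.PosDef)
    (K₁ : Matrix (Fin m1) (Fin n) ℝ) (K₂ : Matrix (Fin m2) (Fin n) ℝ)
    (hK₁ : K₁ = -((R₁₁ + γ • (B₁ᵀ * Pi * B₁)
            - (γ * γ) • (B₁ᵀ * Pi * B₂ * (R₁₂ + γ • (B₂ᵀ * Pi * B₂))⁻¹ * (B₂ᵀ * Pi * B₁)))⁻¹
          * (γ • (B₁ᵀ * Pi
              * (1 - γ • (B₂ * (R₁₂ + γ • (B₂ᵀ * Pi * B₂))⁻¹ * (B₂ᵀ * Pi))) * A))))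
    (hK₂ : K₂ = -((R₁₂ + γ • (B₂ᵀ * Pi * B₂)
            - (γ * γ) • (B₂ᵀ * Pi * B₁ * (R₁₁ + γ • (B₁ᵀ * Pi * B₁))⁻¹ * (B₁ᵀ * Pi * B₂)))⁻¹
          * (γ • (B₂ᵀ * Pi
              * (1 - γ • (B₁ * (R₁₁ + γ • (B₁ᵀ * Pi * B₁))⁻¹ * (B₁ᵀ * Pi))) * A))))
    (Pnext : Matrix (Fin n) (Fin n) ℝ)
    (hPnext : Pnext = Q₁ + K₁ᵀ * R₁₁ * K₁ + K₂ᵀ * R₁₂ * K₂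
        + γ • ((A + B₁ * K₁ + B₂ * K₂)ᵀ * Pi * (A + B₁ * K₁ + B₂ * K₂))) :
    Pnext = Q₁ + γ • (Aᵀ * Pi * A)
      - (γ * γ) • (fromCols (Aᵀ * Pi * B₁) (Aᵀ * Pi * B₂) * G⁻¹
          * fromRows (B₁ᵀ * Pi * A) (B₂ᵀ * Pi * A)) := by
  set B := fromCols B₁ B₂
  set K := fromRows K₁ K₂
  have hD₁ : IsUnit (R₁₁ + γ • (B₁ᵀ * Pi * B₁)).det := by
    simpa [hG] using hGpd.toBlocks₁₁.det_pos.ne'.isUnit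
  have hD₂ : IsUnit (R₁₂ + γ • (B₂ᵀ * Pi * B₂)).det := by
    simpa [hG] using hGpd.toBlocks₂₂.det_pos.ne'.isUnit
  have hGu : IsUnit G.det := hGpd.det_pos.ne'.isUnit
  have hK : K = -(γ • (G⁻¹ * (Bᵀ * Pi * A))) := by
    subst hG
    exact fromRows_gains_eq A Pi B₁ B₂ R₁₁ R₁₂ γ hD₁ hD₂ hGu K₁ K₂ hK₁ hK₂
  have hGB : G = fromBlocks R₁₁ 0 0 R₁₂ + γ • (Bᵀ * Pi * B) := by
    rw [hG, transpose_fromCols, fromRows_mul, fromRows_mul_fromCols, fromBlocks_smul,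
      fromBlocks_add]
    simp only [zero_add]
  have hPnext' : Pnext = Q₁ + Kᵀ * fromBlocks R₁₁ 0 0 R₁₂ * K
      + γ • ((A + B * K)ᵀ * Pi * (A + B * K)) := by
    rw [hPnext, transpose_fromRows, fromCols_mul_fromBlocks, fromCols_mul_fromRows,
      fromCols_mul_fromRows, add_assoc A]
    simp only [Matrix.mul_zero, add_zero, zero_add, add_assoc]
  have hAPB : fromCols (Aᵀ * Pi * B₁) (Aᵀ * Pi * B₂) = Aᵀ * Pi * B := (mul_fromCols _ _ _).symm
  have hBPA : fromRows (B₁ᵀ * Pi * A) (B₂ᵀ * Pi * A) = Bᵀ * Pi * A := by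
    rw [transpose_fromCols, fromRows_mul, fromRows_mul]
  rw [hPnext', hAPB, hBPA]
  exact riccati_update_of_optimal_gain A Pi Q₁ B _ G K γ hGB hGu hK

theorem stmt_9 {n m1 m2 : ℕ}
    (A Q₁ Pi : Matrix (Fin n) (Fin n) ℝ) (B₁ : Matrix (Fin n) (Fin m1) ℝ)
    (B₂ : Matrix (Fin n) (Fin m2) ℝ)
    (R₁₁ : Matrix (Fin m1) (Fin m1) ℝ) (R₁₂ : Matrix (Fin m2) (Fin m2) ℝ)
    (γ : ℝ) (hγ : 0 < γ) (hγ1 : γ < 1)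
    (hQ : Q₁.PosSemidef) (hPi : Pi.PosSemidef) (hR11 : R₁₁.PosDef) (hR12 : R₁₂.PosDef)
    (G : Matrix (Fin m1 ⊕ Fin m2) (Fin m1 ⊕ Fin m2) ℝ)
    (hG : G = fromBlocks (R₁₁ + γ • (B₁ᵀ * Pi * B₁)) (γ • (B₁ᵀ * Pi * B₂))
                         (γ • (B₂ᵀ * Pi * B₁)) (R₁₂ + γ • (B₂ᵀ * Pi * B₂)))
    (hGpd : G.PosDef)
    (hS1 : IsUnit (R₁₁ + γ • (B₁ᵀ * Pi * B₁)
            - (γ * γ) • (B₁ᵀ * Pi * B₂ * (R₁₂ + γ • (B₂ᵀ * Pi * B₂))⁻¹ * (B₂ᵀ * Pi * B₁))).det)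
    (hS2 : IsUnit (R₁₂ + γ • (B₂ᵀ * Pi * B₂)
            - (γ * γ) • (B₂ᵀ * Pi * B₁ * (R₁₁ + γ • (B₁ᵀ * Pi * B₁))⁻¹ * (B₁ᵀ * Pi * B₂))).det)
    (K₁ : Matrix (Fin m1) (Fin n) ℝ) (K₂ : Matrix (Fin m2) (Fin n) ℝ)
    (hK₁ : K₁ = -((R₁₁ + γ • (B₁ᵀ * Pi * B₁)
            - (γ * γ) • (B₁ᵀ * Pi * B₂ * (R₁₂ + γ • (B₂ᵀ * Pi * B₂))⁻¹ * (B₂ᵀ * Pi * B₁)))⁻¹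
          * (γ • (B₁ᵀ * Pi
              * (1 - γ • (B₂ * (R₁₂ + γ • (B₂ᵀ * Pi * B₂))⁻¹ * (B₂ᵀ * Pi))) * A))))
    (hK₂ : K₂ = -((R₁₂ + γ • (B₂ᵀ * Pi * B₂)
            - (γ * γ) • (B₂ᵀ * Pi * B₁ * (R₁₁ + γ • (B₁ᵀ * Pi * B₁))⁻¹ * (B₁ᵀ * Pi * B₂)))⁻¹
          * (γ • (B₂ᵀ * Pi
              * (1 - γ • (B₁ * (R₁₁ + γ • (B₁ᵀ * Pi * B₁))⁻¹ * (B₁ᵀ * Pi))) * A))))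
    (Pnext : Matrix (Fin n) (Fin n) ℝ)
    (hPnext : Pnext = Q₁ + K₁ᵀ * R₁₁ * K₁ + K₂ᵀ * R₁₂ * K₂
        + γ • ((A + B₁ * K₁ + B₂ * K₂)ᵀ * Pi * (A + B₁ * K₁ + B₂ * K₂))) :
    Pnext = Q₁ + γ • (Aᵀ * Pi * A)
      - (γ * γ) • (fromCols (Aᵀ * Pi * B₁) (Aᵀ * Pi * B₂) * G⁻¹
          * fromRows (B₁ᵀ * Pi * A) (B₂ᵀ * Pi * A)) :=
  stmt_9_general A Q₁ Pi B₁ B₂ R₁₁ R₁₂ γ G hG hGpd K₁ K₂ hK₁ hK₂ Pnext hPnext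
end

section
/- Let (u*, v*) solve the linear system (R₁₁ + γB₁ᵀPB₁)u* + γB₁ᵀPB₂v* = −γB₁ᵀPAx and γB₂ᵀPB₁u* + (R₁₂ + γB₂ᵀPB₂)v* = −γB₂ᵀPAx for all x ∈ ℝⁿ, with u* = −K₁x, v* = −K₂x. Then the minimum value xᵀQ₁x + u*ᵀR₁₁u* + v*ᵀR₁₂v* + γ(Ax+B₁u*+B₂v*)ᵀP(Ax+B₁u*+B₂v*) equals xᵀP₊x where P₊ = Q₁ + γAᵀPA − γ²[AᵀPB₁ AᵀPB₂]·G⁻¹·[B₁ᵀPA; B₂ᵀPA] and G is the 2×2 block matrix [R₁₁+γB₁ᵀPB₁, γB₁ᵀPB₂; γB₂ᵀPB₁, R₁₂+γB₂ᵀPB₂]. -/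
/-!
Stack the two controls into one vector `w = (u, v)` acting through `B = [B₁ B₂]` with the
block-diagonal cost `R = diag(R₁₁, R₁₂)`; then `G = R + γ BᵀPB` and the first-order conditions
read `G w = -γ BᵀPA x`. Pairing them with `w` gives `wᵀRw + γ (Bw)ᵀP(Bw) = -γ (Bw)ᵀPAx`, so the
cost collapses to `xᵀQ₁x + γ (Ax)ᵀP(Ax + Bw)`. On the other side, `γ² G⁻¹BᵀPAx = -γ w`, so the
Schur-complement term of `xᵀP₊x` is `-γ (Ax)ᵀPBw` as well.
-/

open Matrix

namespace Matrix

variable {ι κ 𝕜 : Type*} [Fintype ι] [Fintype κ] [CommRing 𝕜]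

theorem quadCost_eq_of_firstOrder (Q P A : Matrix ι ι 𝕜) (B : Matrix ι κ 𝕜)
    (R : Matrix κ κ 𝕜) (γ : 𝕜) (x : ι → 𝕜) (w : κ → 𝕜)
    (hw : (R + γ • (Bᵀ * P * B)) *ᵥ w = -((γ • (Bᵀ * P * A)) *ᵥ x)) :
    x ⬝ᵥ (Q *ᵥ x) + w ⬝ᵥ (R *ᵥ w) + γ * ((A *ᵥ x + B *ᵥ w) ⬝ᵥ (P *ᵥ (A *ᵥ x + B *ᵥ w)))
      = x ⬝ᵥ (Q *ᵥ x) + γ * ((A *ᵥ x) ⬝ᵥ (P *ᵥ (A *ᵥ x + B *ᵥ w))) := by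
  have hpair : w ⬝ᵥ (R *ᵥ w) + γ * ((B *ᵥ w) ⬝ᵥ (P *ᵥ (B *ᵥ w)))
      = -(γ * ((B *ᵥ w) ⬝ᵥ (P *ᵥ (A *ᵥ x)))) := by
    have h := congrArg (w ⬝ᵥ ·) hw
    simpa only [add_mulVec, smul_mulVec, dotProduct_add, dotProduct_smul, dotProduct_neg,
      smul_eq_mul, ← mulVec_mulVec, dotProduct_mulVec w Bᵀ, vecMul_transpose] using h
  simp only [add_dotProduct, mulVec_add, dotProduct_add] at hpair ⊢
  linear_combination hpair

variable [DecidableEq κ]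

theorem smul_mul_nonsing_inv_mul_mulVec (C : Matrix ι κ 𝕜) (G : Matrix κ κ 𝕜)
    (F : Matrix κ ι 𝕜) (γ : 𝕜) (x : ι → 𝕜) (w : κ → 𝕜) (hG : IsUnit G.det)
    (hw : G *ᵥ w = -((γ • F) *ᵥ x)) :
    ((γ * γ) • (C * G⁻¹ * F)) *ᵥ x = -(γ • (C *ᵥ w)) := by
  have hw' : G⁻¹ *ᵥ ((γ • F) *ᵥ x) = -w := by
    rw [← neg_eq_iff_eq_neg.mpr hw, mulVec_neg, mulVec_mulVec, nonsing_inv_mul G hG,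
      one_mulVec]
  calc ((γ * γ) • (C * G⁻¹ * F)) *ᵥ x = γ • (C *ᵥ (G⁻¹ *ᵥ ((γ • F) *ᵥ x))) := by
        rw [mulVec_mulVec, mulVec_mulVec, ← smul_mulVec, mul_smul, Matrix.mul_smul,
          Matrix.mul_assoc]
    _ = -(γ • (C *ᵥ w)) := by rw [hw', mulVec_neg, smul_neg]

theorem quadCost_eq_riccati_of_firstOrder (Q P A : Matrix ι ι 𝕜) (B : Matrix ι κ 𝕜)
    (R : Matrix κ κ 𝕜) (γ : 𝕜) (x : ι → 𝕜) (w : κ → 𝕜)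
    (hG : IsUnit (R + γ • (Bᵀ * P * B)).det)
    (hw : (R + γ • (Bᵀ * P * B)) *ᵥ w = -((γ • (Bᵀ * P * A)) *ᵥ x)) :
    x ⬝ᵥ (Q *ᵥ x) + w ⬝ᵥ (R *ᵥ w) + γ * ((A *ᵥ x + B *ᵥ w) ⬝ᵥ (P *ᵥ (A *ᵥ x + B *ᵥ w)))
      = x ⬝ᵥ ((Q + γ • (Aᵀ * P * A)
          - (γ * γ) • (Aᵀ * P * B * (R + γ • (Bᵀ * P * B))⁻¹ * (Bᵀ * P * A))) *ᵥ x) := by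
  rw [quadCost_eq_of_firstOrder Q P A B R γ x w hw, sub_mulVec,
    smul_mul_nonsing_inv_mul_mulVec _ _ _ γ x w hG hw]
  simp only [add_mulVec, smul_mulVec, ← mulVec_mulVec, dotProduct_add, dotProduct_sub,
    dotProduct_neg, dotProduct_smul, smul_eq_mul, mulVec_add, dotProduct_mulVec x Aᵀ,
    vecMul_transpose]
  ring

end Matrix

theorem stmt_16_general {n m1 m2 : ℕ}
    (A Q₁ P : Matrix (Fin n) (Fin n) ℝ) (B₁ : Matrix (Fin n) (Fin m1) ℝ)
    (B₂ : Matrix (Fin n) (Fin m2) ℝ)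
    (R₁₁ : Matrix (Fin m1) (Fin m1) ℝ) (R₁₂ : Matrix (Fin m2) (Fin m2) ℝ)
    (γ : ℝ)
    (K₁ : Matrix (Fin m1) (Fin n) ℝ) (K₂ : Matrix (Fin m2) (Fin n) ℝ)
    (hFOC : ∀ x : Fin n → ℝ,
      (R₁₁ + γ • (B₁ᵀ * P * B₁)) *ᵥ (-(K₁ *ᵥ x)) + (γ • (B₁ᵀ * P * B₂)) *ᵥ (-(K₂ *ᵥ x))
          = -((γ • (B₁ᵀ * P * A)) *ᵥ x)
      ∧ (γ • (B₂ᵀ * P * B₁)) *ᵥ (-(K₁ *ᵥ x)) + (R₁₂ + γ • (B₂ᵀ * P * B₂)) *ᵥ (-(K₂ *ᵥ x))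
          = -((γ • (B₂ᵀ * P * A)) *ᵥ x))
    (G : Matrix (Fin m1 ⊕ Fin m2) (Fin m1 ⊕ Fin m2) ℝ)
    (hG : G = fromBlocks (R₁₁ + γ • (B₁ᵀ * P * B₁)) (γ • (B₁ᵀ * P * B₂))
                         (γ • (B₂ᵀ * P * B₁)) (R₁₂ + γ • (B₂ᵀ * P * B₂)))
    (hGinv : IsUnit G.det)
    (Pplus : Matrix (Fin n) (Fin n) ℝ)
    (hPplus : Pplus = Q₁ + γ • (Aᵀ * P * A)
      - (γ * γ) • (fromCols (Aᵀ * P * B₁) (Aᵀ * P * B₂) * G⁻¹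
          * fromRows (B₁ᵀ * P * A) (B₂ᵀ * P * A))) :
    ∀ x : Fin n → ℝ,
      x ⬝ᵥ (Q₁ *ᵥ x) + (-(K₁ *ᵥ x)) ⬝ᵥ (R₁₁ *ᵥ (-(K₁ *ᵥ x)))
        + (-(K₂ *ᵥ x)) ⬝ᵥ (R₁₂ *ᵥ (-(K₂ *ᵥ x)))
        + γ * ((A *ᵥ x + B₁ *ᵥ (-(K₁ *ᵥ x)) + B₂ *ᵥ (-(K₂ *ᵥ x))) ⬝ᵥ
            (P *ᵥ (A *ᵥ x + B₁ *ᵥ (-(K₁ *ᵥ x)) + B₂ *ᵥ (-(K₂ *ᵥ x)))))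
      = x ⬝ᵥ (Pplus *ᵥ x) := by
  intro x
  set B := fromCols B₁ B₂ with hB
  set R : Matrix (Fin m1 ⊕ Fin m2) (Fin m1 ⊕ Fin m2) ℝ := fromBlocks R₁₁ 0 0 R₁₂
  have hGR : G = R + γ • (Bᵀ * P * B) := by
    rw [hG, transpose_fromCols, fromRows_mul, fromRows_mul_fromCols, fromBlocks_smul,
      fromBlocks_add, zero_add, zero_add]
  have hw : (R + γ • (Bᵀ * P * B)) *ᵥ Sum.elim (-(K₁ *ᵥ x)) (-(K₂ *ᵥ x))
      = -((γ • (Bᵀ * P * A)) *ᵥ x) := by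
    rw [← hGR, hG, fromBlocks_mulVec, transpose_fromCols, fromRows_mul, fromRows_mul]
    ext (i | i)
    · simpa [smul_mulVec, fromRows_mulVec] using congrFun (hFOC x).1 i
    · simpa [smul_mulVec, fromRows_mulVec] using congrFun (hFOC x).2 i
  have hcost := quadCost_eq_riccati_of_firstOrder Q₁ P A B R γ x _ (hGR ▸ hGinv) hw
  rw [fromCols_mulVec_sumElim, fromBlocks_mulVec, sumElim_dotProduct_sumElim] at hcost
  simp only [Sum.elim_comp_inl, Sum.elim_comp_inr, zero_mulVec, add_zero, zero_add] at hcost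
  rw [← hGR, hB, mul_fromCols, transpose_fromCols, fromRows_mul, fromRows_mul, ← add_assoc,
    ← add_assoc] at hcost
  rw [hPplus, hcost]

theorem stmt_16 {n m1 m2 : ℕ}
    (A Q₁ P : Matrix (Fin n) (Fin n) ℝ) (B₁ : Matrix (Fin n) (Fin m1) ℝ)
    (B₂ : Matrix (Fin n) (Fin m2) ℝ)
    (R₁₁ : Matrix (Fin m1) (Fin m1) ℝ) (R₁₂ : Matrix (Fin m2) (Fin m2) ℝ)
    (γ : ℝ) (hγ : 0 < γ)
    (hQ : Q₁.PosSemidef) (hP : P.PosSemidef) (hR11 : R₁₁.PosDef) (hR12 : R₁₂.PosDef)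
    (K₁ : Matrix (Fin m1) (Fin n) ℝ) (K₂ : Matrix (Fin m2) (Fin n) ℝ)
    (hFOC : ∀ x : Fin n → ℝ,
      (R₁₁ + γ • (B₁ᵀ * P * B₁)) *ᵥ (-(K₁ *ᵥ x)) + (γ • (B₁ᵀ * P * B₂)) *ᵥ (-(K₂ *ᵥ x))
          = -((γ • (B₁ᵀ * P * A)) *ᵥ x)
      ∧ (γ • (B₂ᵀ * P * B₁)) *ᵥ (-(K₁ *ᵥ x)) + (R₁₂ + γ • (B₂ᵀ * P * B₂)) *ᵥ (-(K₂ *ᵥ x))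
          = -((γ • (B₂ᵀ * P * A)) *ᵥ x))
    (G : Matrix (Fin m1 ⊕ Fin m2) (Fin m1 ⊕ Fin m2) ℝ)
    (hG : G = fromBlocks (R₁₁ + γ • (B₁ᵀ * P * B₁)) (γ • (B₁ᵀ * P * B₂))
                         (γ • (B₂ᵀ * P * B₁)) (R₁₂ + γ • (B₂ᵀ * P * B₂)))
    (hGinv : IsUnit G.det)
    (Pplus : Matrix (Fin n) (Fin n) ℝ)
    (hPplus : Pplus = Q₁ + γ • (Aᵀ * P * A)
      - (γ * γ) • (fromCols (Aᵀ * P * B₁) (Aᵀ * P * B₂) * G⁻¹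
          * fromRows (B₁ᵀ * P * A) (B₂ᵀ * P * A))) :
    ∀ x : Fin n → ℝ,
      x ⬝ᵥ (Q₁ *ᵥ x) + (-(K₁ *ᵥ x)) ⬝ᵥ (R₁₁ *ᵥ (-(K₁ *ᵥ x)))
        + (-(K₂ *ᵥ x)) ⬝ᵥ (R₁₂ *ᵥ (-(K₂ *ᵥ x)))
        + γ * ((A *ᵥ x + B₁ *ᵥ (-(K₁ *ᵥ x)) + B₂ *ᵥ (-(K₂ *ᵥ x))) ⬝ᵥ
            (P *ᵥ (A *ᵥ x + B₁ *ᵥ (-(K₁ *ᵥ x)) + B₂ *ᵥ (-(K₂ *ᵥ x)))))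
      = x ⬝ᵥ (Pplus *ᵥ x) :=
  stmt_16_general A Q₁ P B₁ B₂ R₁₁ R₁₂ γ K₁ K₂ hFOC G hG hGinv Pplus hPplus
end
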